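/- Let φ = C₁ ∧ … ∧ C_m be a monotone 3-CNF formula with zones Z_φ and Z'_φ constructed from it. For every configuration γ' satisfying the node (Z'_φ, ∅) via a surjection h', if some subset γ'' ⊆ γ' satisfies the node (Z_φ, ∅), then there is a clause C_i such that h'(x^i_j) ∈ γ'' and h'(y^i_j) ∈ γ'' for each j = 1, 2, 3. -/

import Mathlib

open scoped Classical NNReal

namespace ATAPaper

/-! ## Intervals with natural endpoints (possibly unbounded) -/

inductive NInterval where
  | cc (a b : ℕ)
  | co (a b : ℕ)
  | oc (a b : ℕ)
  | oo (a b : ℕ)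
  | ci (a : ℕ)
  | oi (a : ℕ)
deriving DecidableEq

/-- Membership of a nonnegative real in an interval. -/
def NInterval.mem (v : ℝ≥0) : NInterval → Prop
  | .cc a b => (a : ℝ≥0) ≤ v ∧ v ≤ (b : ℝ≥0)
  | .co a b => (a : ℝ≥0) ≤ v ∧ v < (b : ℝ≥0)
  | .oc a b => (a : ℝ≥0) < v ∧ v ≤ (b : ℝ≥0)
  | .oo a b => (a : ℝ≥0) < v ∧ v < (b : ℝ≥0)
  | .ci a => (a : ℝ≥0) ≤ v
  | .oi a => (a : ℝ≥0) < v

/-- The largest constant appearing in an interval. -/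
def NInterval.bound : NInterval → ℕ
  | .cc a b | .co a b | .oc a b | .oo a b => max a b
  | .ci a | .oi a => a

/-! ## Transition formulas `Φ(Q)` with reset `x.φ` and deactivation `x̄.φ` -/

inductive TF (Q : Type*) where
  | tt
  | ff
  | loc (q : Q)
  | guard (I : NInterval)
  | and (φ ψ : TF Q)
  | or (φ ψ : TF Q)
  | reset (φ : TF Q)
  | deact (φ : TF Q)

/-- A state of a 1-ATA is a location together with a clock value which is
either inactive (`none` = ⊥) or a nonnegative real.  A configuration is a
finite set of states. -/
abbrev Config (Q : Type*) := Finset (Q × Option ℝ≥0)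

section BasicDefs

variable {Q A : Type*}

/-- `M ⊨_v φ`. -/
def TF.sat (M : Config Q) : TF Q → Option ℝ≥0 → Prop
  | .tt, _ => True
  | .ff, _ => False
  | .loc q, v => (q, v) ∈ M
  | .guard I, v => v = none ∨ ∃ r, v = some r ∧ I.mem r
  | .and φ ψ, v => φ.sat M v ∧ ψ.sat M v
  | .or φ ψ, v => φ.sat M v ∨ ψ.sat M v
  | .reset φ, _ => φ.sat M (some 0)
  | .deact φ, _ => φ.sat M none

/-- `M` is a minimal model of `φ` on `v`. -/
def MinModel (M : Config Q) (v : Option ℝ≥0) (φ : TF Q) : Prop :=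
  φ.sat M v ∧ ∀ M' ⊂ M, ¬ φ.sat M' v

/-- The disjuncts of a formula (assumed to be in disjunctive normal form). -/
def TF.disjuncts : TF Q → List (TF Q)
  | .or φ ψ => φ.disjuncts ++ ψ.disjuncts
  | φ => [φ]

/-- The intervals occurring (anywhere) in a transition formula. -/
def TF.guards : TF Q → List NInterval
  | .guard I => [I]
  | .and φ ψ | .or φ ψ => φ.guards ++ ψ.guards
  | .reset φ | .deact φ => φ.guards
  | _ => []

/-! ## One-clock alternating timed automata with deactivation -/

structure OneATA (Q A : Type*) where
  init : Q
  final : Set Q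
  delta : Q → A → Option (TF Q)

/-- `C` is one of the disjuncts of `δ(q,a)`. -/
def OneATA.isTarget (𝒜 : OneATA Q A) (q : Q) (a : A) (C : TF Q) : Prop :=
  ∃ φ, 𝒜.delta q a = some φ ∧ C ∈ φ.disjuncts

/-- Time elapse on a configuration: add `d` to every active value, keep `⊥`. -/
noncomputable def Config.delay (γ : Config Q) (d : ℝ≥0) : Config Q :=
  γ.image (fun s => (s.1, s.2.map (· + d)))

/-- Discrete transition `γ →^{a,C} γ'` where the target `χ` assigns to each
state of `γ` a disjunct of the corresponding transition formula. -/
def OneATA.DStep (𝒜 : OneATA Q A) (γ : Config Q) (a : A)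
    (χ : Q × Option ℝ≥0 → TF Q) (γ' : Config Q) : Prop :=
  (∀ s ∈ γ, 𝒜.isTarget s.1 a (χ s)) ∧
  ∃ Mo : Q × Option ℝ≥0 → Config Q,
    (∀ s ∈ γ, MinModel (Mo s) s.2 (χ s)) ∧ γ' = γ.biUnion Mo

/-- Combined transition `γ →^{d,a,C} γ'`. -/
def OneATA.Step (𝒜 : OneATA Q A) (γ : Config Q) (d : ℝ≥0) (a : A)
    (χ : Q × Option ℝ≥0 → TF Q) (γ' : Config Q) : Prop :=
  𝒜.DStep (γ.delay d) a χ γ'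

/-- A configuration is accepting if all its locations are accepting. -/
def OneATA.AcceptingCfg (𝒜 : OneATA Q A) (γ : Config Q) : Prop :=
  ∀ s ∈ γ, s.1 ∈ 𝒜.final

/-- Accepting runs on (finite) timed words. -/
inductive OneATA.AccRun (𝒜 : OneATA Q A) : Config Q → List (ℝ≥0 × A) → Prop
  | nil {γ} : 𝒜.AcceptingCfg γ → 𝒜.AccRun γ []
  | cons {γ γ' : Config Q} {d : ℝ≥0} {a : A} {w : List (ℝ≥0 × A)}
      (χ : Q × Option ℝ≥0 → TF Q) :
      𝒜.Step γ d a χ γ' → 𝒜.AccRun γ' w → 𝒜.AccRun γ ((d, a) :: w)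

/-- The language of a 1-ATA. -/
def OneATA.Lang (𝒜 : OneATA Q A) : Set (List (ℝ≥0 × A)) :=
  {w | 𝒜.AccRun {(𝒜.init, some 0)} w}

/-- Reachability between configurations by timed and discrete transitions. -/
inductive OneATA.Reach (𝒜 : OneATA Q A) : Config Q → Config Q → Prop
  | refl (γ) : 𝒜.Reach γ γ
  | delay {γ γ'} (d : ℝ≥0) : 𝒜.Reach γ γ' → 𝒜.Reach γ (γ'.delay d)
  | step {γ γ' γ''} (a : A) (χ) : 𝒜.Reach γ γ' → 𝒜.DStep γ' a χ γ'' → 𝒜.Reach γ γ''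

/-- The width of a configuration: the number of active states. -/
noncomputable def Config.width (γ : Config Q) : ℕ :=
  (γ.filter (fun s => s.2 ≠ none)).card

/-- The 1-ATA has width at most `k`. -/
def OneATA.WidthBounded (𝒜 : OneATA Q A) (k : ℕ) : Prop :=
  ∀ γ, 𝒜.Reach {(𝒜.init, some 0)} γ → γ.width ≤ k

/-- All constants appearing in the automaton are at most `M`. -/
def OneATA.BoundedBy (𝒜 : OneATA Q A) (M : ℕ) : Prop :=
  ∀ q a φ, 𝒜.delta q a = some φ → ∀ I ∈ φ.guards, I.bound ≤ M

/-! ## Region equivalence and entailment on configurations -/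

/-- `γ ≃_M γ'` via the bijection `h`. -/
def RegionEquivWith (M : ℕ) (γ γ' : Config Q)
    (h : Q × Option ℝ≥0 → Q × Option ℝ≥0) : Prop :=
  Set.BijOn h ↑γ ↑γ' ∧
  (∀ s ∈ γ, (h s).1 = s.1) ∧
  (∀ s ∈ γ, ((h s).2 = none ↔ s.2 = none)) ∧
  (∀ s ∈ γ, ∀ r r', s.2 = some r → (h s).2 = some r' →
    ((r ≤ (M : ℝ≥0)) ↔ (r' ≤ (M : ℝ≥0))) ∧
    (r ≤ (M : ℝ≥0) →
      (⌊(r : ℝ)⌋ = ⌊(r' : ℝ)⌋ ∧ (Int.fract (r : ℝ) = 0 ↔ Int.fract (r' : ℝ) = 0)))) ∧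
  (∀ s₁ ∈ γ, ∀ s₂ ∈ γ, ∀ r₁ r₂ r₁' r₂',
    s₁.2 = some r₁ → s₂.2 = some r₂ → (h s₁).2 = some r₁' → (h s₂).2 = some r₂' →
    r₁ ≤ (M : ℝ≥0) → r₂ ≤ (M : ℝ≥0) →
    (Int.fract (r₁ : ℝ) ≤ Int.fract (r₂ : ℝ) ↔ Int.fract (r₁' : ℝ) ≤ Int.fract (r₂' : ℝ)))

/-- Region equivalence `γ ≃_M γ'`. -/
def RegionEquiv (M : ℕ) (γ γ' : Config Q) : Prop := ∃ h, RegionEquivWith M γ γ' h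

/-- Configuration entailment `γ ⊨_M γ'` : some subset of `γ'` is region equivalent
to `γ`. -/
def CfgEntails (M : ℕ) (γ γ' : Config Q) : Prop :=
  ∃ γ'' ⊆ γ', RegionEquiv M γ γ''

end BasicDefs


/-! ## MTL (negation normal form) -/

inductive MTL (A : Type*) where
  | atom (a : A)
  | natom (a : A)
  | conj (φ ψ : MTL A)
  | disj (φ ψ : MTL A)
  | next (I : NInterval) (φ : MTL A)
  | untl (I : NInterval) (φ ψ : MTL A)

section MTLDefs

variable {A : Type*}

/-- Accumulated time `Σ_{c=1}^{p} d_c` of the first `p` letters of a timed word. -/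
def twtime (w : List (ℝ≥0 × A)) (p : ℕ) : ℝ≥0 := ((w.take p).map Prod.fst).sum

/-- `(w, i) ⊨ φ` (positions are 0-based). -/
def MTL.holdsAt (w : List (ℝ≥0 × A)) : MTL A → ℕ → Prop
  | .atom a, i => ∃ h : i < w.length, (w.get ⟨i, h⟩).2 = a
  | .natom a, i => ∃ h : i < w.length, (w.get ⟨i, h⟩).2 ≠ a
  | .conj φ ψ, i => φ.holdsAt w i ∧ ψ.holdsAt w i
  | .disj φ ψ, i => φ.holdsAt w i ∨ ψ.holdsAt w i
  | .next I φ, i => ∃ h : i + 1 < w.length, φ.holdsAt w (i + 1) ∧ I.mem (w.get ⟨i + 1, h⟩).1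
  | .untl I φ ψ, i => ∃ k, i ≤ k ∧ k < w.length ∧ ψ.holdsAt w k ∧
      I.mem (twtime w (k + 1) - twtime w (i + 1)) ∧
      ∀ j, i ≤ j → j < k → φ.holdsAt w j

/-- The language of an MTL formula (`w ⊨ φ` iff `φ` holds at the first position). -/
def MTL.Lang (φ : MTL A) : Set (List (ℝ≥0 × A)) := {w | φ.holdsAt w 0}

/-- Pure LTL formulas: every interval is `[0, ∞)`. -/
def MTL.isPure : MTL A → Bool
  | .atom _ | .natom _ => true
  | .conj φ ψ | .disj φ ψ => φ.isPure && ψ.isPure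
  | .next I φ => decide (I = NInterval.ci 0) && φ.isPure
  | .untl I φ ψ => decide (I = NInterval.ci 0) && φ.isPure && ψ.isPure

/-- The subformulas of an MTL formula. -/
def MTL.subfs : MTL A → List (MTL A)
  | .atom a => [.atom a]
  | .natom a => [.natom a]
  | .conj φ ψ => .conj φ ψ :: (φ.subfs ++ ψ.subfs)
  | .disj φ ψ => .disj φ ψ :: (φ.subfs ++ ψ.subfs)
  | .next I φ => .next I φ :: φ.subfs
  | .untl I φ ψ => .untl I φ ψ :: (φ.subfs ++ ψ.subfs)

/-- One-sided MTL: in every Until, the left argument is a pure LTL formula. -/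
def MTL.oneSided : MTL A → Prop
  | .atom _ | .natom _ => True
  | .conj φ ψ | .disj φ ψ => φ.oneSided ∧ ψ.oneSided
  | .next _ φ => φ.oneSided
  | .untl _ φ ψ => φ.isPure = true ∧ ψ.oneSided

/-! ## The MTL-to-1-ATA construction with deactivation -/

/-- Locations of the constructed automaton: the initial location `φ_init`,
locations for formulas (in particular Until subformulas and `φ` itself), and
locations `(X_I ψ)ʳ`. -/
inductive MLoc (A : Type*) where
  | start
  | form (ψ : MTL A)
  | nextr (I : NInterval) (ψ : MTL A)

/-- Prefix `x̄.` if `ψ` is pure LTL, and nothing otherwise. -/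
def barP (ψ : MTL A) (φ : TF (MLoc A)) : TF (MLoc A) :=
  if ψ.isPure then .deact φ else φ

/-- Prefix `x̄.` if `ψ` is pure LTL, and `x.` otherwise. -/
def rhoP (ψ : MTL A) (φ : TF (MLoc A)) : TF (MLoc A) :=
  if ψ.isPure then .deact φ else .reset φ

variable [DecidableEq A]

/-- The transition formula `δ(ψ, a)` for subformulas `ψ`. -/
def dform : MTL A → A → TF (MLoc A)
  | .atom b, a => if b = a then .tt else .ff
  | .natom b, a => if b = a then .ff else .tt
  | .conj φ ψ, a => .and (barP φ (dform φ a)) (barP ψ (dform ψ a))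
  | .disj φ ψ, a => .or (barP φ (dform φ a)) (barP ψ (dform ψ a))
  | .next I ψ, _ => .reset (.loc (.nextr I ψ))
  | .untl I φ ψ, a =>
      .or (.and (rhoP ψ (dform ψ a)) (.guard I))
          (.and (rhoP φ (dform φ a)) (.loc (.form (.untl I φ ψ))))

/-- The transition function of the constructed automaton `A'_φ`. -/
def mlocDelta (φ₀ : MTL A) : MLoc A → A → Option (TF (MLoc A))
  | .start, a => some (rhoP φ₀ (dform φ₀ a))
  | .form ψ, a => some (dform ψ a)
  | .nextr I ψ, a => some (.and (.guard I) (rhoP ψ (dform ψ a)))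

/-- The 1-ATA `A'_φ` constructed from an MTL formula `φ`:
initial location `φ_init`, no accepting locations. -/
def ataOf (φ : MTL A) : OneATA (MLoc A) A :=
  { init := .start, final := ∅, delta := mlocDelta φ }

end MTLDefs

section KB
variable {A : Type*}
/-- The recursive width bound `k_ψ`. -/
def kBound : MTL A → ℕ
  | .atom _ | .natom _ => 1
  | .conj φ ψ => if (MTL.conj φ ψ).isPure then 1 else kBound φ + kBound ψ
  | .disj φ ψ => if (MTL.disj φ ψ).isPure then 1 else max (kBound φ) (kBound ψ)
  | .next I φ => if (MTL.next I φ).isPure then 1 else kBound φ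
  | .untl I φ ψ => if (MTL.untl I φ ψ).isPure then 1 else kBound ψ
end KB


/-! ## Zones (variables `x_{q,i}`), nodes and their configuration semantics -/

section ZoneDefs

variable {Q A : Type*}

/-- A (semantic) zone: a finite set of variables `x_{q,i}` together with the
set of valuations satisfying its constraints. -/
structure SemZone (Q : Type*) where
  vars : Finset (Q × ℕ)
  val : ((Q × ℕ) → ℝ≥0) → Prop

/-- `γ` satisfies the node `(Z, IA)` via the surjection `h`. -/
def NodeSatVia (Z : SemZone Q) (IA : Finset (Q × ℕ)) (γ : Config Q)
    (h : Q × ℕ → Q × Option ℝ≥0) : Prop :=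
  (∀ y ∈ Z.vars ∪ IA, (h y).1 = y.1) ∧
  (∀ y ∈ Z.vars ∪ IA, h y ∈ γ) ∧
  (∀ s ∈ γ, ∃ y ∈ Z.vars ∪ IA, h y = s) ∧
  (∀ y ∈ IA, (h y).2 = none) ∧
  ∃ ν : (Q × ℕ) → ℝ≥0, (∀ y ∈ Z.vars, (h y).2 = some (ν y)) ∧ Z.val ν

/-- `γ ∈ ⟦(Z, IA)⟧`. -/
def NodeSat (Z : SemZone Q) (IA : Finset (Q × ℕ)) (γ : Config Q) : Prop :=
  ∃ h, NodeSatVia Z IA γ h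

/-- The special empty node `(Z_∅, {})`, satisfied exactly by the empty
configuration. -/
def emptySemZone {Q : Type*} : SemZone Q := ⟨∅, fun _ => True⟩

/-- The initial node `((x_{q₀,1} = 0), ∅)`. -/
def initSemZone (𝒜 : OneATA Q A) : SemZone Q :=
  ⟨{(𝒜.init, 1)}, fun ν => ν (𝒜.init, 1) = 0⟩

/-! ### Simple clauses and the successor computation -/

/-- A clause is a conjunction of atoms of the form `true`, `false`, `q`, `I`,
`x.q`, `x̄.q`. -/
def TF.isSimpleConj : TF Q → Bool
  | .tt => true
  | .ff => true
  | .loc _ => true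
  | .guard _ => true
  | .reset (.loc _) => true
  | .deact (.loc _) => true
  | .and φ ψ => φ.isSimpleConj && ψ.isSimpleConj
  | _ => false

/-- Every transition formula of the automaton is in disjunctive normal form. -/
def OneATA.normalized (𝒜 : OneATA Q A) : Prop :=
  ∀ q a φ, 𝒜.delta q a = some φ → ∀ C ∈ φ.disjuncts, C.isSimpleConj = true

/-- The interval atoms of a clause. -/
def TF.topGuards : TF Q → List NInterval
  | .guard I => [I]
  | .and φ ψ => φ.topGuards ++ ψ.topGuards
  | _ => []

/-- The location atoms `q` of a clause. -/
def TF.atomLocs : TF Q → List Q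
  | .loc q => [q]
  | .and φ ψ => φ.atomLocs ++ ψ.atomLocs
  | _ => []

/-- The reset atoms `x.q` of a clause. -/
def TF.resetLocs : TF Q → List Q
  | .reset (.loc q) => [q]
  | .and φ ψ => φ.resetLocs ++ ψ.resetLocs
  | _ => []

/-- The deactivation atoms `x̄.q` of a clause. -/
def TF.deactLocs : TF Q → List Q
  | .deact (.loc q) => [q]
  | .and φ ψ => φ.deactLocs ++ ψ.deactLocs
  | _ => []

/-- The inactive variable set of the successor node: `x'_{q,0}` for every atom
`x̄.q`, and for every atom `q` of a clause of an inactive variable. -/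
noncomputable def succIA (Z : SemZone Q) (IA : Finset (Q × ℕ))
    (T : Q × ℕ → TF Q) : Finset (Q × ℕ) :=
  ((Z.vars ∪ IA).biUnion fun y => ((T y).deactLocs.toFinset).image fun q => (q, 0)) ∪
  (IA.biUnion fun y => ((T y).atomLocs.toFinset).image fun q => (q, 0))

/-- Number of active variables whose clause contains the atom `q`. -/
noncomputable def copyCount (Z : SemZone Q) (T : Q × ℕ → TF Q) (q : Q) : ℕ :=
  (Z.vars.filter fun y => q ∈ (T y).atomLocs).card

/-- The active variable set of the successor node: `x'_{q,1}` for resets, and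
fresh variables `x'_{q,ℓ}` with `2 ≤ ℓ` (smallest free indices) for atoms `q`
of clauses of active variables. -/
noncomputable def succVars (Z : SemZone Q) (IA : Finset (Q × ℕ))
    (T : Q × ℕ → TF Q) : Finset (Q × ℕ) :=
  (((Z.vars ∪ IA).biUnion fun y => (T y).resetLocs.toFinset).image fun q => (q, 1)) ∪
  ((Z.vars.biUnion fun y => (T y).atomLocs.toFinset).biUnion fun q =>
    (Finset.Icc 2 (copyCount Z T q + 1)).image fun i => (q, i))

/-- The successor computation on nodes:  time elapse, guard intersection,
reset/deactivation with fresh variables, and renaming (canonicalization is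
semantically transparent).  `T` assigns to every variable of the node a
disjunct of the transition formula of its location on the letter `a`.  If a
chosen disjunct is `false`, the target is discarded; if all chosen disjuncts
are `true`, the successor is the special empty node. -/
def Succ (𝒜 : OneATA Q A) (Z : SemZone Q) (IA : Finset (Q × ℕ)) (a : A)
    (T : Q × ℕ → TF Q) (Z' : SemZone Q) (IA' : Finset (Q × ℕ)) : Prop :=
  (∀ y ∈ Z.vars ∪ IA, 𝒜.isTarget y.1 a (T y)) ∧
  (∀ y ∈ Z.vars ∪ IA, T y ≠ TF.ff) ∧
  ((∀ y ∈ Z.vars ∪ IA, T y = TF.tt) → (Z' = emptySemZone ∧ IA' = ∅)) ∧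
  ((¬ ∀ y ∈ Z.vars ∪ IA, T y = TF.tt) →
    IA' = succIA Z IA T ∧
    Z'.vars = succVars Z IA T ∧
    ∃ g : (Q × ℕ) → Q → ℕ,
      (∀ y ∈ Z.vars, ∀ q ∈ (T y).atomLocs, 2 ≤ g y q ∧ g y q ≤ copyCount Z T q + 1) ∧
      (∀ y₁ ∈ Z.vars, ∀ y₂ ∈ Z.vars, ∀ q, q ∈ (T y₁).atomLocs → q ∈ (T y₂).atomLocs →
        g y₁ q = g y₂ q → y₁ = y₂) ∧
      Z'.val = fun ν' => ∃ (ν : (Q × ℕ) → ℝ≥0) (d : ℝ≥0), Z.val ν ∧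
        (∀ y ∈ Z.vars, ∀ I ∈ (T y).topGuards, I.mem (ν y + d)) ∧
        (∀ y ∈ Z.vars ∪ IA, ∀ q ∈ (T y).resetLocs, ν' (q, 1) = 0) ∧
        (∀ y ∈ Z.vars, ∀ q ∈ (T y).atomLocs, ν' (q, g y q) = ν y + d))

/-- Time elapse on a single state. -/
noncomputable def stDelay (s : Q × Option ℝ≥0) (d : ℝ≥0) : Q × Option ℝ≥0 :=
  (s.1, s.2.map (· + d))

/-- `γ →^{d,a,(C₁,…,C_m)} γ'` where the disjuncts chosen in the step correspond,
via a surjection witnessing `γ ∈ ⟦(Z,IA)⟧`, to the target tuple `T` of the node. -/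
def StepMatching (𝒜 : OneATA Q A) (Z : SemZone Q) (IA : Finset (Q × ℕ))
    (γ : Config Q) (d : ℝ≥0) (a : A) (T : Q × ℕ → TF Q) (γ' : Config Q) : Prop :=
  ∃ h χ, NodeSatVia Z IA γ h ∧
    (∀ y ∈ Z.vars ∪ IA, χ (stDelay (h y) d) = T y) ∧
    𝒜.Step γ d a χ γ'

/-- Reachability in the zone graph. -/
inductive ZReach (𝒜 : OneATA Q A) :
    SemZone Q × Finset (Q × ℕ) → SemZone Q × Finset (Q × ℕ) → Prop
  | refl (n) : ZReach 𝒜 n n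
  | step {n₁ n₂ n₃} (a : A) (T) :
      ZReach 𝒜 n₁ n₂ → Succ 𝒜 n₂.1 n₂.2 a T n₃.1 n₃.2 → ZReach 𝒜 n₁ n₃

/-- A node is accepting if the locations of all its variables are accepting. -/
def AccNode (𝒜 : OneATA Q A) (Z : SemZone Q) (IA : Finset (Q × ℕ)) : Prop :=
  ∀ y ∈ Z.vars ∪ IA, y.1 ∈ 𝒜.final

/-! ### Entailment between nodes -/

/-- Node entailment `(Z,IA) ⊨_M (Z',IA')`. -/
def NodeEntails (M : ℕ) (Z : SemZone Q) (IA : Finset (Q × ℕ))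
    (Z' : SemZone Q) (IA' : Finset (Q × ℕ)) : Prop :=
  ∀ γ', NodeSat Z' IA' γ' → ∃ γ, NodeSat Z IA γ ∧ CfgEntails M γ γ'

/-- Classical region equivalence between valuations over the variable set `V`. -/
def ValRegEquiv (M : ℕ) (V : Finset (Q × ℕ)) (u u' : (Q × ℕ) → ℝ≥0) : Prop :=
  (∀ y ∈ V, ((u y ≤ (M : ℝ≥0)) ↔ (u' y ≤ (M : ℝ≥0))) ∧
    (u y ≤ (M : ℝ≥0) →
      (⌊(u y : ℝ)⌋ = ⌊(u' y : ℝ)⌋ ∧ (Int.fract (u y : ℝ) = 0 ↔ Int.fract (u' y : ℝ) = 0)))) ∧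
  (∀ y ∈ V, ∀ z ∈ V, u y ≤ (M : ℝ≥0) → u z ≤ (M : ℝ≥0) →
    (Int.fract (u y : ℝ) ≤ Int.fract (u z : ℝ) ↔
      Int.fract (u' y : ℝ) ≤ Int.fract (u' z : ℝ)))

/-- The bounded entailment check `(Z,IA) ⊨ᵇ_M (Z',IA')`, for zones over the same
variables, using the identity correspondence of variables. -/
def BoundedEntails (M : ℕ) (Z : SemZone Q) (IA : Finset (Q × ℕ))
    (Z' : SemZone Q) (IA' : Finset (Q × ℕ)) : Prop :=
  IA ⊆ IA' ∧ ∀ u', Z'.val u' → ∃ u, Z.val u ∧ ValRegEquiv M Z.vars u u'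

/-! ### Syntactic zones -/

/-- Comparison relations in zone constraints. -/
inductive ZRel | lt | le | gt | ge

def ZRel.holds : ZRel → ℝ → ℝ → Prop
  | .lt, x, y => x < y
  | .le, x, y => x ≤ y
  | .gt, x, y => x > y
  | .ge, x, y => x ≥ y

/-- A zone constraint: `y ∼ k` or `y − x ∼ k` with `k ∈ ℤ`. -/
inductive ZConstr (Q : Type*) where
  | single (y : Q × ℕ) (r : ZRel) (k : ℤ)
  | diff (y x : Q × ℕ) (r : ZRel) (k : ℤ)

def ZConstr.holds (ν : (Q × ℕ) → ℝ≥0) : ZConstr Q → Prop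
  | .single y r k => r.holds (ν y : ℝ) (k : ℝ)
  | .diff y x r k => r.holds ((ν y : ℝ) - (ν x : ℝ)) (k : ℝ)

/-- The variables occurring in a constraint. -/
def ZConstr.varsIn : ZConstr Q → List (Q × ℕ)
  | .single y _ _ => [y]
  | .diff y x _ _ => [y, x]

/-- A (syntactic) zone: a finite set of variables and a finite conjunction of
constraints. -/
structure Zone (Q : Type*) where
  vars : Finset (Q × ℕ)
  constrs : List (ZConstr Q)

def Zone.satBy (Z : Zone Q) (ν : (Q × ℕ) → ℝ≥0) : Prop :=
  ∀ c ∈ Z.constrs, c.holds ν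

/-- Constraints only mention variables of the zone. -/
def Zone.wf (Z : Zone Q) : Prop :=
  ∀ c ∈ Z.constrs, ∀ v ∈ c.varsIn, v ∈ Z.vars

/-- The semantic zone of a syntactic zone. -/
def Zone.toSem (Z : Zone Q) : SemZone Q := ⟨Z.vars, Z.satBy⟩

/-! ### The `N'_r` sets for the entailment check -/

/-- Location preserving one-to-one mapping from `Var(Z)` to `Var(Z')`. -/
def LocPresInj (Z Z' : Zone Q) (r : Q × ℕ → Q × ℕ) : Prop :=
  Set.InjOn r ↑Z.vars ∧ (∀ y ∈ Z.vars, r y ∈ Z'.vars) ∧ ∀ y ∈ Z.vars, (r y).1 = y.1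

/-- `γ' ∈ N'_r` : `γ'` satisfies `(Z', IA')` via a surjection whose induced
valuation, transported back along `r`, is region equivalent to no valuation
satisfying `Z`. -/
def InNr (M : ℕ) (Z Z' : Zone Q) (IA' : Finset (Q × ℕ))
    (r : Q × ℕ → Q × ℕ) (γ' : Config Q) : Prop :=
  ∃ (h' : Q × ℕ → Q × Option ℝ≥0) (ν' : (Q × ℕ) → ℝ≥0),
    (∀ y ∈ Z'.vars ∪ IA', (h' y).1 = y.1) ∧
    (∀ y ∈ Z'.vars ∪ IA', h' y ∈ γ') ∧
    (∀ s ∈ γ', ∃ y ∈ Z'.vars ∪ IA', h' y = s) ∧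
    (∀ y ∈ IA', (h' y).2 = none) ∧
    (∀ y ∈ Z'.vars, (h' y).2 = some (ν' y)) ∧
    Z'.satBy ν' ∧
    ∀ ν, Z.satBy ν → ¬ ValRegEquiv M Z.vars ν (fun y => ν' (r y))

end ZoneDefs


/-! ## The zones `Z_φ` and `Z'_φ` constructed from a monotone 3-CNF formula -/

/-- The two locations `q_x` and `q_y`. -/
inductive XY | qx | qy
deriving DecidableEq

/-- The zone variables used in the reduction, for a formula with `m` clauses:
`px_j, py_j, nx_j, ny_j` (dummy clauses), `x^i_j, y^i_j` (clause literals) for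
`Z'_φ`, and `x⁺_j, y⁺_j, x⁻_j, y⁻_j` for `Z_φ`. -/
inductive MVar (m : ℕ) where
  | px (j : Fin 3)
  | py (j : Fin 3)
  | nx (j : Fin 3)
  | ny (j : Fin 3)
  | xc (i : Fin m) (j : Fin 3)
  | yc (i : Fin m) (j : Fin 3)
  | xp (j : Fin 3)
  | yp (j : Fin 3)
  | xm (j : Fin 3)
  | ym (j : Fin 3)
deriving DecidableEq

section Mono

variable {m : ℕ}

/-- The location of each variable. -/
def MVar.loc : MVar m → XY
  | .px _ | .nx _ | .xc _ _ | .xp _ | .xm _ => .qx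
  | .py _ | .ny _ | .yc _ _ | .yp _ | .ym _ => .qy

def MVar.inZ : MVar m → Prop
  | .xp _ | .yp _ | .xm _ | .ym _ => True
  | _ => False

/-- The variables of `Z_φ`. -/
def ZVars (m : ℕ) : Set (MVar m) := {y | y.inZ}

/-- The variables of `Z'_φ`. -/
def Z'Vars (m : ℕ) : Set (MVar m) := {y | ¬ y.inZ}

/-- `γ` satisfies the node `(Z, ∅)` (zone given semantically by the predicate
`P` on valuations, over the variable set `V`) via the surjection `h`. -/
def MSat (V : Set (MVar m)) (P : (MVar m → ℝ≥0) → Prop) (γ : Config XY)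
    (h : MVar m → XY × Option ℝ≥0) : Prop :=
  (∀ y ∈ V, (h y).1 = y.loc) ∧
  (∀ y ∈ V, h y ∈ γ) ∧
  (∀ s ∈ γ, ∃ y ∈ V, h y = s) ∧
  ∃ ν : MVar m → ℝ≥0, (∀ y ∈ V, (h y).2 = some (ν y)) ∧ P ν

/-- The constraints of the zone `Z_φ` (with `k` positive clauses and `m`
clauses in total). -/
def ZphiSat (m k : ℕ) (ν : MVar m → ℝ≥0) : Prop :=
  (∀ j : Fin 3, 0 ≤ (ν (.yp j) : ℝ) - ν (.xp j) ∧ (ν (.yp j) : ℝ) - ν (.xp j) ≤ 1) ∧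
  (∀ j : Fin 3, 1 < (ν (.ym j) : ℝ) - ν (.xm j) ∧ (ν (.ym j) : ℝ) - ν (.xm j) ≤ 2) ∧
  (∀ j : Fin 2, 1 ≤ (ν (.xp j.succ) : ℝ) - ν (.yp j.castSucc) ∧
      (ν (.xp j.succ) : ℝ) - ν (.yp j.castSucc) ≤ 5) ∧
  (∀ j : Fin 2, 1 ≤ (ν (.xm j.succ) : ℝ) - ν (.ym j.castSucc) ∧
      (ν (.xm j.succ) : ℝ) - ν (.ym j.castSucc) ≤ 5) ∧
  ((ν (.yp 2) : ℝ) < 14 * ((k : ℝ) + 1) - 2) ∧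
  ((ν (.xm 0) : ℝ) > 14 * ((k : ℝ) + 1) - 2) ∧
  ((ν (.ym 2) : ℝ) - ν (.xp 0) < 14 * ((m : ℝ) + 2) - 6)

/-- The constraints of the zone `Z'_φ`, for a monotone 3-CNF formula whose
`i`-th clause has literals on the propositional variables `lits i 0`,
`lits i 1`, `lits i 2`. -/
def Z'phiSat (m : ℕ) {PV : Type*} (lits : Fin m → Fin 3 → PV)
    (ν : MVar m → ℝ≥0) : Prop :=
  (∀ j : Fin 3, (ν (.px j) : ℝ) = 3 * (j : ℕ) ∧ (ν (.py j) : ℝ) = 3 * (j : ℕ)) ∧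
  (∀ j : Fin 3, (ν (.nx j) : ℝ) = 14 * ((m : ℝ) + 1) + 3 * (j : ℕ) ∧
      (ν (.ny j) : ℝ) = 14 * ((m : ℝ) + 1) + 3 * (j : ℕ) + 2) ∧
  (∀ (i : Fin m) (j : Fin 3),
      14 * ((i : ℕ) + 1 : ℝ) + 3 * (j : ℕ) ≤ (ν (.xc i j) : ℝ) ∧
      (ν (.xc i j) : ℝ) ≤ 14 * ((i : ℕ) + 1 : ℝ) + 3 * (j : ℕ) + 2 ∧
      14 * ((i : ℕ) + 1 : ℝ) + 3 * (j : ℕ) ≤ (ν (.yc i j) : ℝ) ∧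
      (ν (.yc i j) : ℝ) ≤ 14 * ((i : ℕ) + 1 : ℝ) + 3 * (j : ℕ) + 2 ∧
      (ν (.xc i j) : ℝ) ≤ (ν (.yc i j) : ℝ)) ∧
  (∀ (i i' : Fin m) (j j' : Fin 3), lits i j = lits i' j' →
      (ν (.xc i' j') : ℝ) - ν (.xc i j) = 14 * (((i' : ℕ) : ℝ) - ((i : ℕ) : ℝ)) +
        3 * (((j' : ℕ) : ℝ) - ((j : ℕ) : ℝ)) ∧
      (ν (.yc i' j') : ℝ) - ν (.yc i j) = 14 * (((i' : ℕ) : ℝ) - ((i : ℕ) : ℝ)) +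
        3 * (((j' : ℕ) : ℝ) - ((j : ℕ) : ℝ)))

/-- The (real) value of a state of a configuration. -/
noncomputable def sval (s : XY × Option ℝ≥0) : ℝ := ((s.2.getD 0 : ℝ≥0) : ℝ)

/-- The assignment `α_{γ'}` extracted from a surjection `h'` witnessing that a
configuration satisfies `(Z'_φ, ∅)`: a propositional variable is true iff the
difference `y − x` of (one of) its literal occurrences exceeds 1. -/
def alphaOf {PV : Type*} (lits : Fin m → Fin 3 → PV)
    (h' : MVar m → XY × Option ℝ≥0) (p : PV) : Prop :=
  ∃ (i : Fin m) (j : Fin 3), lits i j = p ∧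
    1 < sval (h' (.yc i j)) - sval (h' (.xc i j))

/-- The assignment `α` falsifies clause `C_i` (clauses `C_1, …, C_k` are
positive, the rest negative): all of its literals are false. -/
def Falsifies {PV : Type*} (k : ℕ) (lits : Fin m → Fin 3 → PV)
    (α : PV → Prop) (i : Fin m) : Prop :=
  if (i : ℕ) < k then ∀ j : Fin 3, ¬ α (lits i j) else ∀ j : Fin 3, α (lits i j)

/-- The monotone 3-CNF formula is satisfiable. -/
def MonoSatisfiable {PV : Type*} (k : ℕ) (lits : Fin m → Fin 3 → PV) : Prop :=
  ∃ α : PV → Prop, ∀ i : Fin m, ¬ Falsifies k lits α i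

end Mono

/-! Every variable of `Z'_φ` takes a value within `2` above its nominal position
`14 · block + 3 · idx`. Along the positive (or negative) chain `x₁ y₁ x₂ y₂ x₃ y₃` of `Z_φ`
consecutive values differ by at most `5`, so once the chain is realised by states of `γ'`
it never leaves a block, and its indices strictly increase; hence it fills a whole block:
the `px, py` block, the block of some clause, or the `nx, ny` block. The remaining
constraints of `Z_φ` rule out the two dummy blocks for at least one of the chains. -/

namespace MVar

variable {m : ℕ}

/-- Block `0` holds `px, py`, block `i + 1` the literals of clause `i`, and block `m + 1`
holds `nx, ny`. -/
def block : MVar m → ℕ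
  | .xc i _ | .yc i _ => i + 1
  | .nx _ | .ny _ => m + 1
  | _ => 0

def idx : MVar m → ℕ
  | .px j | .py j | .nx j | .ny j | .xc _ j | .yc _ j
  | .xp j | .yp j | .xm j | .ym j => j

def offset (u : MVar m) : ℕ := 14 * u.block + 3 * u.idx

lemma idx_lt_three (u : MVar m) : u.idx < 3 := by
  cases u <;> exact Fin.isLt _

lemma eq_of_block_eq_of_idx_eq {u v : MVar m} (hu : ¬ u.inZ) (hv : ¬ v.inZ)
    (hloc : u.loc = v.loc) (hblock : u.block = v.block) (hidx : u.idx = v.idx) : u = v := by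
  cases u <;> cases v <;>
    simp_all [loc, inZ, block, idx, Fin.ext_iff] <;> omega

lemma block_cases (u : MVar m) :
    u.block = 0 ∨ (∃ i : Fin m, u.block = i + 1) ∨ u.block = m + 1 := by
  cases u <;> simp [block]

end MVar

namespace Z'phiSat

variable {m : ℕ} {PV : Type*} {lits : Fin m → Fin 3 → PV} {ν' : MVar m → ℝ≥0}

lemma mem_Icc_offset (hZ' : Z'phiSat m lits ν') {u : MVar m}
    (hu : ¬ u.inZ) : (ν' u : ℝ) ∈ Set.Icc (u.offset : ℝ) (u.offset + 2) := by
  obtain ⟨hp, hn, hc, -⟩ := hZ'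
  cases u <;> simp only [MVar.offset, MVar.block, MVar.idx, MVar.inZ] at hu ⊢ <;> push_cast
  · constructor <;> linarith [(hp ‹_›).1]
  · constructor <;> linarith [(hp ‹_›).2]
  · constructor <;> linarith [(hn ‹_›).1]
  · constructor <;> linarith [(hn ‹_›).2]
  · exact ⟨(hc ‹_› ‹_›).1, (hc ‹_› ‹_›).2.1⟩
  · exact ⟨(hc ‹_› ‹_›).2.2.1, (hc ‹_› ‹_›).2.2.2.1⟩
  all_goals exact absurd trivial hu

/-- Two variables whose values differ by at most `5` lie in the same block: blocks are `14`
apart and a block spans only `8`. -/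
lemma block_eq (hZ' : Z'phiSat m lits ν') {u v : MVar m} (hu : ¬ u.inZ) (hv : ¬ v.inZ)
    (hle : (ν' u : ℝ) ≤ ν' v) (hle' : (ν' v : ℝ) ≤ ν' u + 5) : u.block = v.block := by
  obtain ⟨hu₁, hu₂⟩ := hZ'.mem_Icc_offset hu
  obtain ⟨hv₁, hv₂⟩ := hZ'.mem_Icc_offset hv
  have h₁ : (u.offset : ℝ) ≤ v.offset + 2 := by linarith
  have h₂ : (v.offset : ℝ) ≤ u.offset + 7 := by linarith
  norm_cast at h₁ h₂
  simp only [MVar.offset] at h₁ h₂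
  have := u.idx_lt_three
  have := v.idx_lt_three
  omega

lemma idx_lt (hZ' : Z'phiSat m lits ν') {u v : MVar m} (hu : ¬ u.inZ) (hv : ¬ v.inZ)
    (hloc : u.loc = v.loc) (hblock : u.block = v.block) (hlt : (ν' u : ℝ) + 1 ≤ ν' v) :
    u.idx < v.idx := by
  have huv : u ≠ v := by
    rintro rfl
    linarith
  have hidx : u.idx ≠ v.idx := fun h => huv (MVar.eq_of_block_eq_of_idx_eq hu hv hloc hblock h)
  have h : (u.offset : ℝ) ≤ v.offset + 1 := by
    linarith [(hZ'.mem_Icc_offset hu).1,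
      (hZ'.mem_Icc_offset hv).2]
  norm_cast at h
  simp only [MVar.offset, hblock] at h
  omega

end Z'phiSat

section Chain

variable {m : ℕ} {PV : Type*} {lits : Fin m → Fin 3 → PV} {ν' : MVar m → ℝ≥0}

/-- Both the positive and the negative chain of `Z_φ` satisfy these bounds. -/
structure IsChain (ν' : MVar m → ℝ≥0) (x y : Fin 3 → MVar m) : Prop where
  x_mem : ∀ j, ¬ (x j).inZ ∧ (x j).loc = .qx
  y_mem : ∀ j, ¬ (y j).inZ ∧ (y j).loc = .qy
  pair : ∀ j, (ν' (x j) : ℝ) ≤ ν' (y j) ∧ (ν' (y j) : ℝ) ≤ ν' (x j) + 2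
  gap : ∀ j : Fin 2, (ν' (y j.castSucc) : ℝ) + 1 ≤ ν' (x j.succ) ∧
    (ν' (x j.succ) : ℝ) ≤ ν' (y j.castSucc) + 5

lemma IsChain.block_eq_and_idx_eq (hZ' : Z'phiSat m lits ν') {x y : Fin 3 → MVar m}
    (hc : IsChain ν' x y) :
    ∀ j, (x j).block = (x 0).block ∧ (y j).block = (x 0).block ∧
      (x j).idx = j ∧ (y j).idx = j := by
  have hxy (j : Fin 3) : (x j).block = (y j).block :=
    hZ'.block_eq (hc.x_mem j).1 (hc.y_mem j).1 (hc.pair j).1 (by linarith [(hc.pair j).2])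
  have hyx (j : Fin 2) : (y j.castSucc).block = (x j.succ).block :=
    hZ'.block_eq (hc.y_mem _).1 (hc.x_mem _).1 (by linarith [(hc.gap j).1]) (hc.gap j).2
  have hx (j : Fin 2) : (x j.castSucc).idx < (x j.succ).idx :=
    hZ'.idx_lt (hc.x_mem _).1 (hc.x_mem _).1 ((hc.x_mem _).2.trans (hc.x_mem _).2.symm)
      ((hxy _).trans (hyx j)) (by linarith [(hc.gap j).1, (hc.pair j.castSucc).1])
  have hy (j : Fin 2) : (y j.castSucc).idx < (y j.succ).idx :=
    hZ'.idx_lt (hc.y_mem _).1 (hc.y_mem _).1 ((hc.y_mem _).2.trans (hc.y_mem _).2.symm)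
      ((hyx j).trans (hxy _)) (by linarith [(hc.gap j).1, (hc.pair j.succ).1])
  have := (x 2).idx_lt_three
  have := (y 2).idx_lt_three
  have hx₀₁ : (x 0).idx < (x 1).idx := hx 0
  have hx₁₂ : (x 1).idx < (x 2).idx := hx 1
  have hy₀₁ : (y 0).idx < (y 1).idx := hy 0
  have hy₁₂ : (y 1).idx < (y 2).idx := hy 1
  have hyx₀ : (y 0).block = (x 1).block := hyx 0
  have hyx₁ : (y 1).block = (x 2).block := hyx 1
  have := hxy 0
  have := hxy 1
  have := hxy 2
  intro j
  fin_cases j <;>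
    simp only [Fin.zero_eta, Fin.mk_one, Fin.reduceFinMk, Fin.isValue, true_and] <;> omega

lemma IsChain.cases (hZ' : Z'phiSat m lits ν') {x y : Fin 3 → MVar m} (hc : IsChain ν' x y) :
    (∀ j, x j = .px j ∧ y j = .py j) ∨ (∃ i, ∀ j, x j = .xc i j ∧ y j = .yc i j) ∨
      (∀ j, x j = .nx j ∧ y j = .ny j) := by
  have h := hc.block_eq_and_idx_eq hZ'
  have hx (j : Fin 3) (u : MVar m) (hu : ¬ u.inZ) (hloc : u.loc = .qx)
      (hb : (x 0).block = u.block) (hi : u.idx = j) : x j = u :=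
    MVar.eq_of_block_eq_of_idx_eq (hc.x_mem j).1 hu ((hc.x_mem j).2.trans hloc.symm)
      ((h j).1.trans hb) ((h j).2.2.1.trans hi.symm)
  have hy (j : Fin 3) (u : MVar m) (hu : ¬ u.inZ) (hloc : u.loc = .qy)
      (hb : (x 0).block = u.block) (hi : u.idx = j) : y j = u :=
    MVar.eq_of_block_eq_of_idx_eq (hc.y_mem j).1 hu ((hc.y_mem j).2.trans hloc.symm)
      ((h j).2.1.trans hb) ((h j).2.2.2.trans hi.symm)
  rcases (x 0).block_cases with h0 | ⟨i, h0⟩ | h0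
  · exact Or.inl fun j => ⟨hx j _ id rfl h0 rfl, hy j _ id rfl h0 rfl⟩
  · exact Or.inr (Or.inl ⟨i, fun j => ⟨hx j _ id rfl h0 rfl, hy j _ id rfl h0 rfl⟩⟩)
  · exact Or.inr (Or.inr fun j => ⟨hx j _ id rfl h0 rfl, hy j _ id rfl h0 rfl⟩)

end Chain

section Reduction

variable {m k : ℕ} {PV : Type*} {lits : Fin m → Fin 3 → PV} {ν' : MVar m → ℝ≥0}

lemma ZphiSat.congr {μ ν : MVar m → ℝ≥0} (h : ∀ y : MVar m, y.inZ → μ y = ν y)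
    (hν : ZphiSat m k ν) : ZphiSat m k μ := by
  have hxp (j : Fin 3) : μ (.xp j) = ν (.xp j) := h _ trivial
  have hyp (j : Fin 3) : μ (.yp j) = ν (.yp j) := h _ trivial
  have hxm (j : Fin 3) : μ (.xm j) = ν (.xm j) := h _ trivial
  have hym (j : Fin 3) : μ (.ym j) = ν (.ym j) := h _ trivial
  simpa only [ZphiSat, hxp, hyp, hxm, hym] using hν

/-- The positive chain cannot sit in the `nx, ny` block, where `ny_j - nx_j = 2`. If it sits
in the `px, py` block, then `x⁺₁ = 0`: the bound on `x⁻₁` keeps the negative chain out of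
that block, and the bound on `y⁻₃ - x⁺₁` keeps it out of the `nx, ny` block, where
`y⁻₃ = ny₃ = 14 (m + 2) - 6`. -/
theorem ZphiSat.exists_clause (hZ' : Z'phiSat m lits ν') (σ : MVar m → MVar m)
    (hσ : ∀ y, y.inZ → ¬ (σ y).inZ ∧ (σ y).loc = y.loc)
    (hZ : ZphiSat m k (fun y => ν' (σ y))) :
    ∃ i : Fin m, (∀ j, σ (.xp j) = .xc i j ∧ σ (.yp j) = .yc i j) ∨
      (∀ j, σ (.xm j) = .xc i j ∧ σ (.ym j) = .yc i j) := by
  obtain ⟨hpos, hneg, hgap, hgap', -, hxm, hspan⟩ := hZ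
  have hchain : IsChain ν' (fun j => σ (.xp j)) (fun j => σ (.yp j)) :=
    ⟨fun _ => hσ _ trivial, fun _ => hσ _ trivial,
      fun j => ⟨by linarith [(hpos j).1], by linarith [(hpos j).2]⟩,
      fun j => ⟨by linarith [(hgap j).1], by linarith [(hgap j).2]⟩⟩
  have hchain' : IsChain ν' (fun j => σ (.xm j)) (fun j => σ (.ym j)) :=
    ⟨fun _ => hσ _ trivial, fun _ => hσ _ trivial,
      fun j => ⟨by linarith [(hneg j).1], by linarith [(hneg j).2]⟩,
      fun j => ⟨by linarith [(hgap' j).1], by linarith [(hgap' j).2]⟩⟩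
  have hp := hZ'.1
  have hn := hZ'.2.1
  rcases hchain.cases hZ' with hσp | ⟨i, hi⟩ | hσn
  · have hx₀ : (ν' (σ (.xp 0)) : ℝ) = 0 := by simpa [(hσp 0).1] using (hp 0).1
    rcases hchain'.cases hZ' with hσp' | ⟨i, hi⟩ | hσn'
    · have : (ν' (σ (.xm 0)) : ℝ) = 0 := by simpa [(hσp' 0).1] using (hp 0).1
      have : (0 : ℝ) ≤ k := k.cast_nonneg
      simp only at hxm
      linarith
    · exact ⟨i, Or.inr hi⟩
    · have : (ν' (σ (.ym 2)) : ℝ) = 14 * (m + 1) + 3 * 2 + 2 := by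
        simpa [(hσn' 2).2] using (hn 2).2
      simp only at hspan
      linarith
  · exact ⟨i, Or.inl hi⟩
  · have : (ν' (σ (.xp 0)) : ℝ) = 14 * (m + 1) := by simpa [(hσn 0).1] using (hn 0).1
    have : (ν' (σ (.yp 0)) : ℝ) = 14 * (m + 1) + 2 := by simpa [(hσn 0).2] using (hn 0).2
    linarith [(hpos 0).2]

end Reduction

theorem statement16_general {PV : Type*} (m k : ℕ)
    (lits : Fin m → Fin 3 → PV) (γ' : Config XY)
    (h' : MVar m → XY × Option ℝ≥0)
    (hsat : MSat (Z'Vars m) (Z'phiSat m lits) γ' h')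
    (γ'' : Config XY) (hsub : γ'' ⊆ γ')
    (hz : ∃ h, MSat (ZVars m) (ZphiSat m k) γ'' h) :
    ∃ i : Fin m, ∀ j : Fin 3, h' (.xc i j) ∈ γ'' ∧ h' (.yc i j) ∈ γ'' := by
  obtain ⟨hloc', -, hsurj, ν', hν', hZ'⟩ := hsat
  obtain ⟨h, hloc, hmem, -, ν, hν, hZ⟩ := hz
  choose! σ hσZ' hσ using fun y (hy : y ∈ ZVars m) => hsurj _ (hsub (hmem y hy))
  have hσloc (y) (hy : y.inZ) : (σ y).loc = y.loc := by
    rw [← hloc' _ (hσZ' y hy), hσ y hy, hloc y hy]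
  have hσν (y) (hy : y.inZ) : ν' (σ y) = ν y :=
    Option.some_injective _ (by rw [← hν' _ (hσZ' y hy), ← hν y hy, hσ y hy])
  have hσmem (y) (hy : y.inZ) : h' (σ y) ∈ γ'' := by rw [hσ y hy]; exact hmem y hy
  obtain ⟨i, hi | hi⟩ := (hZ.congr hσν).exists_clause hZ' σ fun y hy => ⟨hσZ' y hy, hσloc y hy⟩
  all_goals
    refine ⟨i, fun j => ?_⟩
    rw [← (hi j).1, ← (hi j).2]
    exact ⟨hσmem _ trivial, hσmem _ trivial⟩

/-- If `γ'` satisfies `(Z'_φ, ∅)` via `h'` and some subset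
`γ'' ⊆ γ'` satisfies `(Z_φ, ∅)`, then there is a clause `C_i` all of whose
variable images `h'(x^i_j), h'(y^i_j)` lie in `γ''`. -/
theorem statement16 {PV : Type*} (m k : ℕ) (hkm : k ≤ m)
    (lits : Fin m → Fin 3 → PV) (γ' : Config XY)
    (h' : MVar m → XY × Option ℝ≥0)
    (hsat : MSat (Z'Vars m) (Z'phiSat m lits) γ' h')
    (γ'' : Config XY) (hsub : γ'' ⊆ γ')
    (hz : ∃ h, MSat (ZVars m) (ZphiSat m k) γ'' h) :
    ∃ i : Fin m, ∀ j : Fin 3, h' (.xc i j) ∈ γ'' ∧ h' (.yc i j) ∈ γ'' :=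
  statement16_general m k lits γ' h' hsat γ'' hsub hz

end ATAPaper
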